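/- Let N ≥ 1 be an integer and let χ : ℝ → [0,1] be a twice continuously differentiable function with χ(θ) = 1 for θ ≤ π and χ(θ) = 0 for θ ≥ 2π. Then there exists a constant C₂ ≥ 1, depending only on N and on upper bounds for |χ′| and |χ″|, with the following property. For any positive real numbers y₁, …, y_N, define G on {(s,θ) ∈ ℝ² : θ > 0, and e^{s+Iθ} ≠ I·y_j for every j with 0 < θ < π} by G(s,θ) = C₂·e^{−2s} + χ(θ)·Σ_{j=1}^N |e^{s+Iθ} − I·y_j|^{−2}, and define δ(s,θ) = min(e^s, min_j |e^{s+Iθ} − I·y_j|) when 0 < θ < π and δ(s,θ) = e^s when θ ≥ π. Then at every point of its domain, ∂²G/∂s² + ∂²G/∂θ² ≥ 4·e^{2s}/δ(s,θ)⁴. -/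

import Mathlib

noncomputable section

open Complex

/-- The barrier `G(s,θ) = C₂·e^{−2s} + χ(θ)·Σⱼ |e^{s+Iθ} − I·yⱼ|⁻²` written in the
logarithmic coordinates `z = e^{s+Iθ}` on the universal cover of `ℂ ∖ {0}`. -/
def barrierG (N : ℕ) (C₂ : ℝ) (χ : ℝ → ℝ) (y : Fin N → ℝ) (s θ : ℝ) : ℝ :=
  C₂ * Real.exp (-2 * s) +
    χ θ * ∑ j, ((‖Complex.exp ((s : ℂ) + Complex.I * (θ : ℂ)) -
      Complex.I * (y j : ℂ)‖) ^ 2)⁻¹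

/-- The distance function `δ`. -/
def deltaFn (N : ℕ) (y : Fin N → ℝ) (s θ : ℝ) : ℝ :=
  if θ < Real.pi then
    min (Real.exp s)
      (⨅ j, ‖Complex.exp ((s : ℂ) + Complex.I * (θ : ℂ)) -
        Complex.I * (y j : ℂ)‖)
  else Real.exp s

/-!
In the coordinates `z = e^{s+iθ}` one has `∂²_s + ∂²_θ = e^{2s} Δ_z`, and `Δ_z |z - w|⁻² = 4 |z - w|⁻⁴`
for every `w` (including `w = 0`, which gives the term `C₂ e^{-2s} = C₂ |z|⁻²`). Where `χ` is locally
constant the Laplacian of `G` is therefore `4 C₂ e^{-2s} + χ(θ) Σⱼ 4 e^{2s} |z - i yⱼ|⁻⁴`, which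
dominates `4 e^{2s} / δ⁴` because `δ` is one of `|z|`, `|z - i yⱼ|`. For `π ≤ θ ≤ 2π` the point `z`
lies in the lower half-plane, so `|z - i yⱼ| ≥ |z| = e^s`; the cross terms `χ'' F + 2 χ' ∂_θ F`
(with `F = Σⱼ |z - i yⱼ|⁻²`) are then at most `3 M N e^{-2s}` in absolute value, where `M` bounds
`|χ'|` and `|χ''|` on `[π, 2π]`, and `C₂ = 1 + M N` absorbs them.
-/

open Filter Topology

section Calculus

variable {𝕜 : Type*} [NontriviallyNormedField 𝕜]

theorem deriv_deriv_eq_iteratedDeriv_two (f : 𝕜 → 𝕜) (x : 𝕜) :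
    deriv (deriv f) x = iteratedDeriv 2 f x := by
  rw [iteratedDeriv_succ, iteratedDeriv_one]

theorem deriv_deriv_mul {f g : 𝕜 → 𝕜} {x : 𝕜} (hf : ContDiffAt 𝕜 2 f x)
    (hg : ContDiffAt 𝕜 2 g x) :
    deriv (deriv fun t => f t * g t) x =
      deriv (deriv f) x * g x + 2 * deriv f x * deriv g x + f x * deriv (deriv g) x := by
  simp only [deriv_deriv_eq_iteratedDeriv_two, iteratedDeriv_fun_mul hf hg,
    Finset.sum_range_succ, Finset.range_zero, Finset.sum_empty, Nat.choose_zero_right,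
    Nat.choose_succ_self_right, Nat.choose_self, Nat.reduceAdd, Nat.add_one_sub_one, tsub_zero,
    tsub_self, Nat.cast_one, Nat.cast_ofNat, iteratedDeriv_zero, iteratedDeriv_one, one_mul, zero_add]
  ring

theorem deriv_deriv_inv {g : 𝕜 → 𝕜} {x : 𝕜} (hg : ContDiff 𝕜 2 g) (hx : g x ≠ 0) :
    deriv (deriv fun t => (g t)⁻¹) x =
      -deriv (deriv g) x / g x ^ 2 + 2 * deriv g x ^ 2 / g x ^ 3 := by
  have hg₁ : Differentiable 𝕜 g := hg.differentiable two_ne_zero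
  have hderiv : deriv (fun t => (g t)⁻¹) =ᶠ[𝓝 x] fun t => -deriv g t / g t ^ 2 :=
    (hg₁.continuous.continuousAt.eventually_ne hx).mono fun t ht =>
      ((hg₁ t).hasDerivAt.inv ht).deriv
  rw [hderiv.deriv_eq, ((hg.differentiable_deriv_two x).hasDerivAt.fun_neg.fun_div
    ((hg₁ x).hasDerivAt.fun_pow 2) (pow_ne_zero 2 hx)).deriv]
  field_simp
  ring

end Calculus

theorem exp_two_mul_eq_sq (x : ℝ) : Real.exp (2 * x) = Real.exp x ^ 2 := by
  rw [← Real.exp_nat_mul]; norm_num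

theorem hasDerivAt_exp_mul (c s : ℝ) :
    HasDerivAt (fun s => Real.exp (c * s)) (c * Real.exp (c * s)) s := by
  simpa [mul_comm] using ((hasDerivAt_id s).const_mul c).exp

theorem deriv_deriv_const_mul_exp_mul (a c s : ℝ) :
    deriv (deriv fun s => a * Real.exp (c * s)) s = a * c ^ 2 * Real.exp (c * s) := by
  rw [funext fun s => ((hasDerivAt_exp_mul c s).const_mul a).deriv,
    (((hasDerivAt_exp_mul c s).const_mul c).const_mul a).deriv]
  ring

def laplacian₂ (f : ℝ → ℝ → ℝ) (s θ : ℝ) : ℝ :=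
  deriv (deriv fun s' => f s' θ) s + deriv (deriv fun θ' => f s θ') θ

section NormSqExpSub

variable (w : ℂ)

/-- `|e^{s+iθ} - w|²`, expanded so that it can be differentiated in `s` and `θ` separately. -/
def normSqExpSub (s θ : ℝ) : ℝ :=
  Real.exp (2 * s) - 2 * Real.exp s * (w.re * Real.cos θ + w.im * Real.sin θ) + normSq w

theorem sq_norm_exp_sub (s θ : ℝ) :
    ‖Complex.exp ((s : ℂ) + I * (θ : ℂ)) - w‖ ^ 2 = normSqExpSub w s θ := by
  rw [Complex.sq_norm, normSqExpSub, normSq_apply, normSq_apply]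
  simp only [Complex.sub_re, Complex.sub_im, Complex.exp_re, Complex.exp_im, Complex.add_re,
    Complex.add_im, Complex.ofReal_re, Complex.ofReal_im, Complex.mul_re, Complex.mul_im,
    I_re, I_im, zero_mul, one_mul, mul_zero, sub_zero, zero_add, add_zero]
  rw [exp_two_mul_eq_sq]
  linear_combination Real.exp s ^ 2 * Real.sin_sq_add_cos_sq θ

theorem normSqExpSub_ne_zero {s θ : ℝ} (h : Complex.exp ((s : ℂ) + I * (θ : ℂ)) ≠ w) :
    normSqExpSub w s θ ≠ 0 := by
  rw [← sq_norm_exp_sub]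
  exact pow_ne_zero 2 (norm_ne_zero_iff.mpr (sub_ne_zero.mpr h))

theorem contDiff_normSqExpSub_left (θ : ℝ) : ContDiff ℝ 2 fun s => normSqExpSub w s θ := by
  unfold normSqExpSub; fun_prop

theorem contDiff_normSqExpSub_right (s : ℝ) : ContDiff ℝ 2 fun θ => normSqExpSub w s θ := by
  unfold normSqExpSub; fun_prop

theorem deriv_normSqExpSub_left (θ : ℝ) :
    deriv (fun s => normSqExpSub w s θ) = fun s =>
      2 * Real.exp (2 * s) - 2 * Real.exp s * (w.re * Real.cos θ + w.im * Real.sin θ) := by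
  ext s
  exact (((hasDerivAt_exp_mul 2 s).sub ((Real.hasDerivAt_exp s).const_mul 2 |>.mul_const _))
    |>.add_const _ |>.deriv).trans (by ring)

theorem deriv_deriv_normSqExpSub_left (θ : ℝ) :
    deriv (deriv fun s => normSqExpSub w s θ) = fun s =>
      4 * Real.exp (2 * s) - 2 * Real.exp s * (w.re * Real.cos θ + w.im * Real.sin θ) := by
  rw [deriv_normSqExpSub_left]
  ext s
  exact (((hasDerivAt_exp_mul 2 s).const_mul 2).sub
    ((Real.hasDerivAt_exp s).const_mul 2 |>.mul_const _) |>.deriv).trans (by ring)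

theorem deriv_normSqExpSub_right (s : ℝ) :
    deriv (fun θ => normSqExpSub w s θ) = fun θ =>
      2 * Real.exp s * (w.re * Real.sin θ - w.im * Real.cos θ) := by
  ext θ
  exact ((((Real.hasDerivAt_cos θ).const_mul w.re).add ((Real.hasDerivAt_sin θ).const_mul w.im)
    |>.const_mul (2 * Real.exp s) |>.const_sub _).add_const _ |>.deriv).trans (by ring)

theorem deriv_deriv_normSqExpSub_right (s : ℝ) :
    deriv (deriv fun θ => normSqExpSub w s θ) = fun θ =>
      2 * Real.exp s * (w.re * Real.cos θ + w.im * Real.sin θ) := by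
  rw [deriv_normSqExpSub_right]
  ext θ
  exact ((((Real.hasDerivAt_sin θ).const_mul w.re).sub ((Real.hasDerivAt_cos θ).const_mul w.im)
    |>.const_mul (2 * Real.exp s)) |>.deriv).trans (by ring)

/-- The conformal identity `Δ_z |z - w|⁻² = 4 |z - w|⁻⁴`, pulled back by `z = e^{s+iθ}`. -/
theorem laplacian₂_inv_normSqExpSub {s θ : ℝ} (h : normSqExpSub w s θ ≠ 0) :
    laplacian₂ (fun s θ => (normSqExpSub w s θ)⁻¹) s θ =
      4 * Real.exp (2 * s) / normSqExpSub w s θ ^ 2 := by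
  rw [laplacian₂, deriv_deriv_inv (contDiff_normSqExpSub_left w θ) h,
    deriv_deriv_inv (contDiff_normSqExpSub_right w s) h, deriv_deriv_normSqExpSub_left,
    deriv_deriv_normSqExpSub_right, deriv_normSqExpSub_left, deriv_normSqExpSub_right]
  have hw : normSq w = w.re ^ 2 + w.im ^ 2 := by rw [normSq_apply]; ring
  field_simp
  rw [normSqExpSub, exp_two_mul_eq_sq, hw]
  linear_combination 8 * Real.exp s ^ 2 * (w.re ^ 2 + w.im ^ 2) * Real.sin_sq_add_cos_sq θ

section Obtuse

-- `hw` says that `Re (conj (e^{iθ}) w) ≤ 0`, i.e. `w` and `e^{iθ}` make an obtuse angle.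
variable {w} {s θ : ℝ} (hw : w.re * Real.cos θ + w.im * Real.sin θ ≤ 0)
include hw

theorem exp_two_mul_le_normSqExpSub : Real.exp (2 * s) ≤ normSqExpSub w s θ := by
  have := normSq_nonneg w
  unfold normSqExpSub
  nlinarith [Real.exp_pos s]

theorem inv_normSqExpSub_le : (normSqExpSub w s θ)⁻¹ ≤ Real.exp (-2 * s) := by
  rw [neg_mul, Real.exp_neg]
  exact inv_anti₀ (Real.exp_pos _) (exp_two_mul_le_normSqExpSub hw)

theorem abs_deriv_normSqExpSub_right_le :
    |deriv (fun θ => normSqExpSub w s θ) θ| ≤ normSqExpSub w s θ := by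
  have hQ : (w.re * Real.sin θ - w.im * Real.cos θ) ^ 2 ≤ normSq w := by
    rw [normSq_apply]
    nlinarith [Real.sin_sq_add_cos_sq θ, sq_nonneg (w.re * Real.cos θ + w.im * Real.sin θ)]
  have hP : Real.exp s * (w.re * Real.cos θ + w.im * Real.sin θ) ≤ 0 :=
    mul_nonpos_of_nonneg_of_nonpos (Real.exp_pos s).le hw
  rw [deriv_normSqExpSub_right, abs_le, normSqExpSub, exp_two_mul_eq_sq]
  constructor <;> nlinarith [
    sq_nonneg (Real.exp s + (w.re * Real.sin θ - w.im * Real.cos θ)),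
    sq_nonneg (Real.exp s - (w.re * Real.sin θ - w.im * Real.cos θ))]

theorem abs_deriv_inv_normSqExpSub_right_le :
    |deriv (fun θ => (normSqExpSub w s θ)⁻¹) θ| ≤ Real.exp (-2 * s) := by
  have hpos : 0 < normSqExpSub w s θ := (Real.exp_pos _).trans_le (exp_two_mul_le_normSqExpSub hw)
  rw [(((contDiff_normSqExpSub_right w s).differentiable two_ne_zero θ).hasDerivAt.fun_inv
    hpos.ne').deriv, abs_div, abs_neg, abs_of_pos (pow_pos hpos 2)]
  calc |deriv (fun θ => normSqExpSub w s θ) θ| / normSqExpSub w s θ ^ 2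
      ≤ normSqExpSub w s θ / normSqExpSub w s θ ^ 2 := by
        gcongr; exact abs_deriv_normSqExpSub_right_le hw
    _ = (normSqExpSub w s θ)⁻¹ := by field_simp
    _ ≤ Real.exp (-2 * s) := inv_normSqExpSub_le hw

end Obtuse

end NormSqExpSub

theorem abs_mul_add_two_mul_mul_le {a b u v M B : ℝ} (ha : |a| ≤ M) (hb : |b| ≤ M)
    (hu : |u| ≤ B) (hv : |v| ≤ B) : |a * u + 2 * b * v| ≤ 3 * M * B := by
  have hM : 0 ≤ M := (abs_nonneg a).trans ha
  calc |a * u + 2 * b * v| ≤ |a| * |u| + 2 * (|b| * |v|) := by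
        refine (abs_add_le _ _).trans_eq ?_
        rw [abs_mul, mul_assoc, abs_mul, abs_two, abs_mul]
    _ ≤ M * B + 2 * (M * B) := by gcongr
    _ = 3 * M * B := by ring

section Barrier

variable {N : ℕ} {C₂ : ℝ} {χ : ℝ → ℝ} {y : Fin N → ℝ} {s θ : ℝ}

theorem barrierG_eq (s θ : ℝ) :
    barrierG N C₂ χ y s θ = C₂ * Real.exp (-2 * s) +
      χ θ * ∑ j, (normSqExpSub (I * y j) s θ)⁻¹ := by
  simp only [barrierG, sq_norm_exp_sub]

theorem deriv_deriv_barrierG_left (hD : ∀ j, normSqExpSub (I * y j) s θ ≠ 0) :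
    deriv (deriv fun s' => barrierG N C₂ χ y s' θ) s =
      4 * C₂ * Real.exp (-2 * s) +
        χ θ * ∑ j, deriv (deriv fun s' => (normSqExpSub (I * y j) s' θ)⁻¹) s := by
  have hinv : ∀ j, ContDiffAt ℝ 2 (fun s' => (normSqExpSub (I * y j) s' θ)⁻¹) s :=
    fun j => ((contDiff_normSqExpSub_left _ θ).contDiffAt).inv (hD j)
  have hsum := ContDiffAt.sum fun j (_ : j ∈ Finset.univ) => hinv j
  simp only [barrierG_eq, deriv_deriv_eq_iteratedDeriv_two]
  rw [iteratedDeriv_fun_add (by fun_prop) (contDiffAt_const.mul hsum),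
    iteratedDeriv_const_mul _ hsum, iteratedDeriv_fun_sum fun j _ => hinv j,
    ← deriv_deriv_eq_iteratedDeriv_two, deriv_deriv_const_mul_exp_mul]
  ring

theorem deriv_deriv_barrierG_right (hχ : ContDiff ℝ 2 χ)
    (hD : ∀ j, normSqExpSub (I * y j) s θ ≠ 0) :
    deriv (deriv fun θ' => barrierG N C₂ χ y s θ') θ =
      deriv (deriv χ) θ * ∑ j, (normSqExpSub (I * y j) s θ)⁻¹ +
        2 * deriv χ θ * ∑ j, deriv (fun θ' => (normSqExpSub (I * y j) s θ')⁻¹) θ +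
        χ θ * ∑ j, deriv (deriv fun θ' => (normSqExpSub (I * y j) s θ')⁻¹) θ := by
  have hinv : ∀ j, ContDiffAt ℝ 2 (fun θ' => (normSqExpSub (I * y j) s θ')⁻¹) θ :=
    fun j => ((contDiff_normSqExpSub_right _ s).contDiffAt).inv (hD j)
  have hsum := ContDiffAt.sum fun j (_ : j ∈ Finset.univ) => hinv j
  simp only [barrierG_eq]
  rw [deriv_deriv_eq_iteratedDeriv_two, iteratedDeriv_const_add two_pos,
    ← deriv_deriv_eq_iteratedDeriv_two, deriv_deriv_mul hχ.contDiffAt hsum,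
    deriv_fun_sum fun j _ => (hinv j).differentiableAt two_ne_zero]
  simp only [deriv_deriv_eq_iteratedDeriv_two, iteratedDeriv_fun_sum fun j _ => hinv j]

theorem laplacian₂_barrierG (hχ : ContDiff ℝ 2 χ)
    (hD : ∀ j, normSqExpSub (I * y j) s θ ≠ 0) :
    laplacian₂ (barrierG N C₂ χ y) s θ =
      4 * C₂ * Real.exp (-2 * s) +
        (deriv (deriv χ) θ * ∑ j, (normSqExpSub (I * y j) s θ)⁻¹ +
          2 * deriv χ θ * ∑ j, deriv (fun θ' => (normSqExpSub (I * y j) s θ')⁻¹) θ) +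
        χ θ * ∑ j, 4 * Real.exp (2 * s) / normSqExpSub (I * y j) s θ ^ 2 := by
  rw [laplacian₂, deriv_deriv_barrierG_left hD, deriv_deriv_barrierG_right hχ hD,
    ← Finset.sum_congr rfl fun j _ => laplacian₂_inv_normSqExpSub _ (hD j)]
  simp only [laplacian₂, Finset.sum_add_distrib]
  ring

theorem laplacian₂_barrierG_of_eventuallyEq_one (hχ : ContDiff ℝ 2 χ)
    (hχ1 : χ =ᶠ[𝓝 θ] fun _ => 1) (hD : ∀ j, normSqExpSub (I * y j) s θ ≠ 0) :
    laplacian₂ (barrierG N C₂ χ y) s θ = 4 * C₂ * Real.exp (-2 * s) +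
      ∑ j, 4 * Real.exp (2 * s) / normSqExpSub (I * y j) s θ ^ 2 := by
  have h₁ : deriv χ θ = 0 := hχ1.deriv_eq.trans (deriv_const θ 1)
  have h₂ : deriv (deriv χ) θ = 0 := hχ1.deriv.deriv_eq.trans (by simp)
  rw [laplacian₂_barrierG hχ hD, h₁, h₂, hχ1.eq_of_nhds]
  ring

theorem laplacian₂_barrierG_of_eventuallyEq_zero (hχ0 : χ =ᶠ[𝓝 θ] fun _ => 0) :
    laplacian₂ (barrierG N C₂ χ y) s θ = 4 * C₂ * Real.exp (-2 * s) := by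
  have hleft : (fun s' => barrierG N C₂ χ y s' θ) = fun s' => C₂ * Real.exp (-2 * s') := by
    simp only [barrierG_eq, hχ0.eq_of_nhds, zero_mul, add_zero]
  have hright : (fun θ' => barrierG N C₂ χ y s θ') =ᶠ[𝓝 θ] fun _ => C₂ * Real.exp (-2 * s) :=
    hχ0.mono fun t ht => by simp only [barrierG_eq, ht, zero_mul, add_zero]
  rw [laplacian₂, hleft, hright.deriv.deriv_eq, deriv_deriv_const_mul_exp_mul]
  simp only [deriv_const', add_zero]
  ring

theorem laplacian₂_barrierG_ge_of_sin_nonpos {M : ℝ} (hχ : ContDiff ℝ 2 χ) (hχθ : 0 ≤ χ θ)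
    (hM₁ : |deriv χ θ| ≤ M) (hM₂ : |deriv (deriv χ) θ| ≤ M) (hy : ∀ j, 0 ≤ y j)
    (hθ : Real.sin θ ≤ 0) :
    (4 * C₂ - 3 * M * N) * Real.exp (-2 * s) ≤ laplacian₂ (barrierG N C₂ χ y) s θ := by
  have hw : ∀ j, (I * y j).re * Real.cos θ + (I * y j).im * Real.sin θ ≤ 0 :=
    fun j => by simpa using mul_nonpos_of_nonneg_of_nonpos (hy j) hθ
  have hD : ∀ j, 0 < normSqExpSub (I * y j) s θ := fun j =>
    (Real.exp_pos _).trans_le (exp_two_mul_le_normSqExpSub (hw j))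
  have hcard : ∀ f : Fin N → ℝ, (∀ j, |f j| ≤ Real.exp (-2 * s)) →
      |∑ j, f j| ≤ N * Real.exp (-2 * s) := fun f hf =>
    (Finset.abs_sum_le_sum_abs _ _).trans
      ((Finset.sum_le_card_nsmul _ _ _ fun j _ => hf j).trans_eq (by simp))
  have hF := hcard _ fun j =>
    (abs_of_pos (inv_pos.mpr (hD j))).trans_le (inv_normSqExpSub_le (hw j))
  have hF' := hcard _ fun j => abs_deriv_inv_normSqExpSub_right_le (s := s) (hw j)
  rw [laplacian₂_barrierG hχ fun j => (hD j).ne']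
  have hχterm : 0 ≤ χ θ * ∑ j, 4 * Real.exp (2 * s) / normSqExpSub (I * y j) s θ ^ 2 := by
    positivity
  linarith [(abs_le.mp (abs_mul_add_two_mul_mul_le hM₂ hM₁ hF hF')).1]

theorem deltaFn_of_pi_le (h : Real.pi ≤ θ) : deltaFn N y s θ = Real.exp s :=
  if_neg h.not_gt

theorem deltaFn_eq_or_of_lt_pi [NeZero N] (h : θ < Real.pi) :
    deltaFn N y s θ = Real.exp s ∨
      ∃ j, deltaFn N y s θ = ‖Complex.exp ((s : ℂ) + I * (θ : ℂ)) - I * (y j : ℂ)‖ := by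
  rw [deltaFn, if_pos h]
  rcases min_choice (Real.exp s)
    (⨅ j, ‖Complex.exp ((s : ℂ) + I * (θ : ℂ)) - I * (y j : ℂ)‖) with hmin | hmin
  · exact .inl hmin
  · obtain ⟨j, hj⟩ := exists_eq_ciInf_of_finite
      (f := fun j => ‖Complex.exp ((s : ℂ) + I * (θ : ℂ)) - I * (y j : ℂ)‖)
    exact .inr ⟨j, hmin.trans hj.symm⟩

theorem four_mul_exp_two_mul_div_exp_pow_four (s : ℝ) :
    4 * Real.exp (2 * s) / Real.exp s ^ 4 = 4 * Real.exp (-2 * s) := by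
  rw [neg_mul, Real.exp_neg, exp_two_mul_eq_sq]
  field_simp

theorem four_mul_exp_div_deltaFn_pow_four_le [NeZero N] (h : θ < Real.pi) :
    4 * Real.exp (2 * s) / deltaFn N y s θ ^ 4 ≤ 4 * Real.exp (-2 * s) +
      ∑ j, 4 * Real.exp (2 * s) / normSqExpSub (I * y j) s θ ^ 2 := by
  rcases deltaFn_eq_or_of_lt_pi (y := y) (s := s) h with hδ | ⟨j, hδ⟩
  · rw [hδ, four_mul_exp_two_mul_div_exp_pow_four]
    exact le_add_of_nonneg_right (by positivity)
  · rw [hδ, show ∀ a : ℝ, a ^ 4 = (a ^ 2) ^ 2 by intro; ring, sq_norm_exp_sub]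
    exact (Finset.single_le_sum (f := fun j => 4 * Real.exp (2 * s) /
      normSqExpSub (I * y j) s θ ^ 2) (fun j _ => by positivity) (Finset.mem_univ j)).trans
      (le_add_of_nonneg_left (by positivity))

end Barrier

theorem exists_abs_deriv_le_on_Icc {χ : ℝ → ℝ} (hχ : ContDiff ℝ 2 χ) (a b : ℝ) :
    ∃ M, 0 ≤ M ∧ ∀ θ ∈ Set.Icc a b, |deriv χ θ| ≤ M ∧ |deriv (deriv χ) θ| ≤ M := by
  obtain ⟨M₁, hM₁⟩ := isCompact_Icc.exists_bound_of_continuousOn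
    (hχ.continuous_deriv one_le_two).continuousOn (s := Set.Icc a b)
  obtain ⟨M₂, hM₂⟩ := isCompact_Icc.exists_bound_of_continuousOn
    (hχ.deriv' (n := 1)).continuous_deriv_one.continuousOn (s := Set.Icc a b)
  exact ⟨max (max M₁ M₂) 0, le_max_right _ _, fun θ hθ =>
    ⟨(hM₁ θ hθ).trans ((le_max_left _ _).trans (le_max_left _ _)),
      (hM₂ θ hθ).trans ((le_max_right _ _).trans (le_max_left _ _))⟩⟩

/-- There is a constant `C₂ ≥ 1`, depending only on `N` and the cutoff `χ`, such that
the barrier `G` satisfies `∂²G/∂s² + ∂²G/∂θ² ≥ 4e^{2s}/δ⁴` on its domain. -/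
theorem barrier_superharmonic (χ : ℝ → ℝ) (hχ : ContDiff ℝ 2 χ)
    (hχ01 : ∀ θ, χ θ ∈ Set.Icc (0 : ℝ) 1)
    (hχ1 : ∀ θ, θ ≤ Real.pi → χ θ = 1)
    (hχ0 : ∀ θ, 2 * Real.pi ≤ θ → χ θ = 0)
    (N : ℕ) (hN : 1 ≤ N) :
    ∃ C₂ : ℝ, 1 ≤ C₂ ∧ ∀ y : Fin N → ℝ, (∀ j, 0 < y j) →
      ∀ s θ : ℝ, 0 < θ →
        (∀ j, θ < Real.pi →
          Complex.exp ((s : ℂ) + Complex.I * (θ : ℂ)) ≠ Complex.I * (y j : ℂ)) →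
        4 * Real.exp (2 * s) / (deltaFn N y s θ) ^ 4 ≤
          deriv (deriv (fun s' => barrierG N C₂ χ y s' θ)) s +
            deriv (deriv (fun θ' => barrierG N C₂ χ y s θ')) θ := by
  have : NeZero N := NeZero.of_pos hN
  obtain ⟨M, hM, hχ'⟩ := exists_abs_deriv_le_on_Icc hχ Real.pi (2 * Real.pi)
  refine ⟨1 + M * N, le_add_of_nonneg_right (by positivity), fun y hy s θ _ hz => ?_⟩
  change _ ≤ laplacian₂ (barrierG N (1 + M * N) χ y) s θ
  have hMN : 0 ≤ M * N * Real.exp (-2 * s) := by positivity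
  rcases lt_or_ge θ Real.pi with hθπ | hπθ
  · rw [laplacian₂_barrierG_of_eventuallyEq_one hχ
      (eventually_of_mem (Iio_mem_nhds hθπ) fun t ht => hχ1 t ht.le)
      fun j => normSqExpSub_ne_zero _ (hz j hθπ)]
    refine (four_mul_exp_div_deltaFn_pow_four_le hθπ).trans ?_
    linarith
  rw [deltaFn_of_pi_le hπθ, four_mul_exp_two_mul_div_exp_pow_four]
  rcases le_or_gt θ (2 * Real.pi) with hθ2π | h2πθ
  · have hsin : Real.sin θ ≤ 0 := by
      simpa using Real.sin_nonpos_of_nonpos_of_neg_pi_le (x := θ - 2 * Real.pi)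
        (by linarith) (by linarith)
    refine le_trans ?_ (laplacian₂_barrierG_ge_of_sin_nonpos hχ (hχ01 θ).1
      (hχ' θ ⟨hπθ, hθ2π⟩).1 (hχ' θ ⟨hπθ, hθ2π⟩).2 (fun j => (hy j).le) hsin)
    linarith
  · rw [laplacian₂_barrierG_of_eventuallyEq_zero
      (eventually_of_mem (Ioi_mem_nhds h2πθ) fun t ht => hχ0 t ht.le)]
    linarith
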